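/- Let ξ be a real irrational number and let α, β be real numbers with 0 < α < 1 and β > 1. Assume there exist integer sequences (u_n)_{n≥1} and (v_n)_{n≥1} with u_n ξ − v_n ≠ 0 and u_n > 0 for all n, such that limsup_{n→∞} |u_{n+1} ξ − v_{n+1}| / |u_n ξ − v_n| ≤ α and limsup_{n→∞} u_{n+1}/u_n ≤ β. Then μ(ξ) ≤ 1 − (log β)/(log α). -/

import Mathlib

open Filter Topology

/-- The irrationality exponent of a real number, as an extended real:
the infimum of all real `μ` such that `|ξ - p/q| > 1/q^μ` for all integers `p, q`
with `q` sufficiently large (`⊤` if no such real `μ` exists). -/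
noncomputable def irrationalityExponent (ξ : ℝ) : EReal :=
  sInf {x : EReal | ∃ μ : ℝ, x = (μ : EReal) ∧
    ∀ᶠ q : ℕ in atTop, ∀ p : ℤ, |ξ - (p : ℝ) / (q : ℝ)| > 1 / (q : ℝ) ^ μ}

/-!
Write `r n = |u n * ξ - v n|`. For any `α' > α` and `β' > β` we eventually have
`r (n+1) ≤ α' * r n` and `u (n+1) ≤ β' * u n`. Given `p / q`, let `n` be the first index with
`r n < 1 / (2q)`; the geometric decay of `r` bounds `β' ^ n` by a constant times `q ^ e` with
`e = -log β' / log α'`. For the first `m ≥ n` with `u m * p ≠ v m * q`, the nonzero integer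
`u m * p - v m * q` gives `|ξ - p / q| > 1 / (2 q u m)`, and `u m ≤ β' * u n`. Hence
`|ξ - p / q| ≫ q ^ (-(1 + e))`; letting `α' → α` and `β' → β` gives the bound.
-/

theorem pow_le_rpow_of_one_le_pow_mul {α β x : ℝ} (hα0 : 0 < α) (hα1 : α < 1) (hβ : 1 ≤ β)
    {k : ℕ} (hx : 1 ≤ α ^ k * x) : β ^ k ≤ x ^ (-Real.log β / Real.log α) := by
  have hx0 : 0 < x := pos_of_mul_pos_right (one_pos.trans_le hx) (by positivity)
  have hlogα : Real.log α < 0 := Real.log_neg hα0 hα1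
  have hlogβ : 0 ≤ Real.log β := Real.log_nonneg hβ
  have hlogx : 0 ≤ k * Real.log α + Real.log x := by
    have := Real.log_nonneg hx
    rwa [Real.log_mul (by positivity) hx0.ne', Real.log_pow] at this
  rw [← Real.log_le_log_iff (by positivity) (by positivity), Real.log_pow,
    Real.log_rpow hx0]
  have hdiff : -Real.log β / Real.log α * Real.log x - k * Real.log β
      = Real.log β * (k * Real.log α + Real.log x) / -Real.log α := by
    field_simp [hlogα.ne]; ring
  have : 0 ≤ Real.log β * (k * Real.log α + Real.log x) / -Real.log α := by
    apply div_nonneg (mul_nonneg hlogβ hlogx); linarith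
  linarith

theorem abs_mul_sub_eq_of_mul_eq {ξ : ℝ} {a b p : ℤ} {q : ℕ} (hq : q ≠ 0)
    (h : a * p = b * q) : |a * ξ - b| = |(a : ℝ)| * |ξ - p / q| := by
  rw [← abs_mul]
  congr 1
  have h' : (a : ℝ) * p = b * q := by exact_mod_cast h
  field_simp
  linarith

theorem one_div_lt_abs_sub_div {ξ : ℝ} {a b p : ℤ} {q : ℕ} (ha : 0 < a) (hq : 0 < q)
    (hap : a * p ≠ b * q) (hsmall : |a * ξ - b| < 1 / (2 * q)) :
    1 / (2 * q * a) < |ξ - p / q| := by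
  have hq' : (0 : ℝ) < q := Nat.cast_pos.2 hq
  have ha' : (0 : ℝ) < a := Int.cast_pos.2 ha
  have hone : (1 : ℝ) ≤ |((a * p - b * q : ℤ) : ℝ)| := by
    rw [← Int.cast_abs]; exact_mod_cast Int.one_le_abs (sub_ne_zero.2 hap)
  have hsplit : ((a * p - b * q : ℤ) : ℝ) = -(a * q) * (ξ - p / q) + q * (a * ξ - b) := by
    push_cast; field_simp; ring
  have htri := hsplit ▸ abs_add_le (-(a * q) * (ξ - p / q) : ℝ) (q * (a * ξ - b))
  rw [abs_mul, abs_mul, abs_neg, abs_of_pos (by positivity : (0 : ℝ) < a * q),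
    abs_of_pos hq'] at htri
  have : q * |a * ξ - b| < 1 / 2 := by
    rw [lt_div_iff₀ (by positivity)] at hsmall; linarith
  rw [div_lt_iff₀ (by positivity)]
  nlinarith

theorem exists_le_not_and_le_mul {P : ℕ → Prop} {u : ℕ → ℤ} {β : ℝ} (hβ : 1 ≤ β)
    (hu0 : ∀ k, 0 ≤ u k) (hdec : ∀ k, P k → P (k + 1) → u (k + 1) < u k)
    (hgrow : ∀ k, (u (k + 1) : ℝ) ≤ β * u k) (n : ℕ) :
    ∃ m, n ≤ m ∧ ¬ P m ∧ (u m : ℝ) ≤ β * u n := by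
  induction hN : (u n).toNat using Nat.strong_induction_on generalizing n with
  | _ N ih =>
  by_cases hn : P n
  · by_cases hn1 : P (n + 1)
    · have hlt := hdec n hn hn1
      obtain ⟨m, hnm, hm, hum⟩ :=
        ih _ (hN ▸ (Int.toNat_lt_toNat ((hu0 _).trans_lt hlt)).2 hlt) (n + 1) rfl
      refine ⟨m, by omega, hm, hum.trans ?_⟩
      gcongr
    · exact ⟨n + 1, by omega, hn1, hgrow n⟩
  · exact ⟨n, le_rfl, hn, le_mul_of_one_le_left (by exact_mod_cast hu0 n) hβ⟩

theorem eventually_le_mul_of_limsup_div_le {f : ℕ → ℝ} (hf : ∀ n, 0 < f n) {a b : ℝ}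
    (h : limsup (fun n => ((f (n + 1) / f n : ℝ) : EReal)) atTop ≤ a) (hab : a < b) :
    ∀ᶠ n in atTop, f (n + 1) ≤ b * f n := by
  filter_upwards [eventually_lt_of_limsup_lt (h.trans_lt (EReal.coe_lt_coe_iff.2 hab))] with n hn
  rw [EReal.coe_lt_coe_iff, div_lt_iff₀ (hf n)] at hn
  exact hn.le

theorem irrationalityExponent_le_of_lt_abs_sub_div {ξ κ c : ℝ} (hc : 0 < c)
    (h : ∀ᶠ q : ℕ in atTop, ∀ p : ℤ, c / (q : ℝ) ^ κ < |ξ - p / q|) :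
    irrationalityExponent ξ ≤ κ := by
  refine EReal.le_of_forall_lt_iff_le.1 fun μ hμ => sInf_le ⟨μ, rfl, ?_⟩
  have hpow : Tendsto (fun q : ℕ => (q : ℝ) ^ (μ - κ)) atTop atTop :=
    (tendsto_rpow_atTop (sub_pos.2 (EReal.coe_lt_coe_iff.1 hμ))).comp tendsto_natCast_atTop_atTop
  filter_upwards [h, hpow.eventually_ge_atTop c⁻¹, eventually_gt_atTop 0] with q hq hqc hq0 p
  have hq0' : (0 : ℝ) < q := Nat.cast_pos.2 hq0
  refine lt_of_le_of_lt ?_ (hq p)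
  rw [Real.rpow_sub hq0', le_div_iff₀ (by positivity), inv_mul_le_iff₀ hc] at hqc
  rw [div_le_div_iff₀ (by positivity) (by positivity), one_mul]
  exact hqc

theorem one_div_mul_lt_abs_sub_div {ξ α β : ℝ} (hξ : Irrational ξ) (hα1 : α < 1) (hβ : 1 ≤ β)
    {u v : ℕ → ℤ} (hpos : ∀ k, 0 < u k)
    (hr : ∀ k, |u (k + 1) * ξ - v (k + 1)| ≤ α * |u k * ξ - v k|)
    (hu : ∀ k, (u (k + 1) : ℝ) ≤ β * u k) {q : ℕ} (hq : 0 < q) (p : ℤ) {n : ℕ}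
    (hn : |u n * ξ - v n| < 1 / (2 * q)) :
    1 / (2 * q * (β * u n)) < |ξ - p / q| := by
  have hδ : 0 < |ξ - p / q| := by
    refine abs_pos.2 (sub_ne_zero.2 ?_)
    simpa using hξ.ne_rational p q
  -- Where `u k * p = v k * q`, the linear form equals `u k * |ξ - p / q|`.
  have hdec : ∀ k, u k * p = v k * q → u (k + 1) * p = v (k + 1) * q → u (k + 1) < u k := by
    intro k hk hk1
    have h := hr k
    rw [abs_mul_sub_eq_of_mul_eq hq.ne' hk, abs_mul_sub_eq_of_mul_eq hq.ne' hk1,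
      abs_of_pos (Int.cast_pos.2 (hpos k)), abs_of_pos (Int.cast_pos.2 (hpos (k + 1))),
      ← mul_assoc] at h
    have hlt : α * u k < u k := mul_lt_of_lt_one_left (Int.cast_pos.2 (hpos k)) hα1
    exact_mod_cast (le_of_mul_le_mul_right h hδ).trans_lt hlt
  obtain ⟨m, hnm, hm, hum⟩ := exists_le_not_and_le_mul hβ (fun k => (hpos k).le) hdec hu n
  have hanti : Antitone fun k => |u k * ξ - v k| := antitone_nat_of_succ_le fun k =>
    (hr k).trans (mul_le_of_le_one_left (abs_nonneg _) hα1.le)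
  refine lt_of_le_of_lt ?_ (one_div_lt_abs_sub_div (hpos m) hq hm ((hanti hnm).trans_lt hn))
  have : (0 : ℝ) < u m := Int.cast_pos.2 (hpos m)
  gcongr

theorem exists_pos_lt_abs_sub_div {ξ α β : ℝ} (hξ : Irrational ξ) (hα0 : 0 < α) (hα1 : α < 1)
    (hβ : 1 ≤ β) {u v : ℕ → ℤ} (hne : u 0 * ξ - v 0 ≠ 0) (hpos : ∀ k, 0 < u k)
    (hr : ∀ k, |u (k + 1) * ξ - v (k + 1)| ≤ α * |u k * ξ - v k|)
    (hu : ∀ k, (u (k + 1) : ℝ) ≤ β * u k) :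
    ∃ c > 0, ∀ᶠ q : ℕ in atTop, ∀ p : ℤ,
      c / (q : ℝ) ^ (1 - Real.log β / Real.log α) < |ξ - p / q| := by
  set r : ℕ → ℝ := fun k => |u k * ξ - v k|
  set e := -Real.log β / Real.log α
  have hr0 : 0 < r 0 := abs_pos.2 hne
  have hu0 : (0 : ℝ) < u 0 := Int.cast_pos.2 (hpos 0)
  have hr_geom (k : ℕ) : r k ≤ α ^ k * r 0 := le_geom hα0.le k fun j _ => hr j
  have hu_geom (k : ℕ) : (u k : ℝ) ≤ β ^ k * u 0 :=
    le_geom (u := fun k => (u k : ℝ)) (by linarith) k fun j _ => hu j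
  refine ⟨1 / (2 * β ^ 2 * u 0 * (2 * r 0) ^ e), by positivity, ?_⟩
  filter_upwards [eventually_gt_atTop 0,
    tendsto_natCast_atTop_atTop.eventually_ge_atTop (1 / (2 * r 0))] with q hq hqr p
  have hq' : (0 : ℝ) < q := Nat.cast_pos.2 hq
  have hr_tendsto : Tendsto (fun k => α ^ k * r 0) atTop (𝓝 0) := by
    simpa using (tendsto_pow_atTop_nhds_zero_of_lt_one hα0.le hα1).mul_const (r 0)
  have hr0q : 1 / (2 * q) ≤ r 0 := by
    rw [div_le_iff₀ (by positivity)] at hqr ⊢; linarith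
  obtain ⟨k, hk, hk1⟩ := Nat.exists_not_and_succ_of_not_zero_of_exists
    (p := fun k => r k < 1 / (2 * q)) (not_lt.2 hr0q)
    (((hr_tendsto.eventually_lt_const (by positivity)).exists).imp fun k => (hr_geom k).trans_lt)
  have hβk : β ^ k ≤ (2 * q * r 0) ^ e := by
    refine pow_le_rpow_of_one_le_pow_mul hα0 hα1 hβ ?_
    have := (not_lt.1 hk).trans (hr_geom k)
    rw [div_le_iff₀ (by positivity)] at this; linarith
  refine lt_of_le_of_lt ?_ (one_div_mul_lt_abs_sub_div hξ hα1 hβ hpos hr hu hq p hk1)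
  have hexp : (q : ℝ) ^ (1 - Real.log β / Real.log α) = q * q ^ e := by
    rw [show 1 - Real.log β / Real.log α = 1 + e by ring, Real.rpow_add hq', Real.rpow_one]
  have huk : (u (k + 1) : ℝ) ≤ β * ((2 * r 0) ^ e * q ^ e) * u 0 :=
    calc (u (k + 1) : ℝ) ≤ β * β ^ k * u 0 := by rw [← pow_succ']; exact hu_geom _
      _ ≤ β * (2 * q * r 0) ^ e * u 0 := by gcongr
      _ = β * ((2 * r 0) ^ e * q ^ e) * u 0 := by
        rw [mul_right_comm 2, Real.mul_rpow (by positivity) hq'.le]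
  have hu_pos : (0 : ℝ) < u (k + 1) := Int.cast_pos.2 (hpos _)
  rw [hexp, div_div]
  refine one_div_le_one_div_of_le (by positivity) ?_
  calc 2 * q * (β * u (k + 1)) ≤ 2 * q * (β * (β * ((2 * r 0) ^ e * q ^ e) * u 0)) := by gcongr
    _ = 2 * β ^ 2 * u 0 * (2 * r 0) ^ e * (q * q ^ e) := by ring

theorem irrationalityExponent_le_of_eventually {ξ α β : ℝ} (hξ : Irrational ξ) (hα0 : 0 < α)
    (hα1 : α < 1) (hβ : 1 ≤ β) {u v : ℕ → ℤ} (hne : ∀ n, (u n : ℝ) * ξ - v n ≠ 0)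
    (hpos : ∀ n, 0 < u n)
    (hr : ∀ᶠ n in atTop, |u (n + 1) * ξ - v (n + 1)| ≤ α * |u n * ξ - v n|)
    (hu : ∀ᶠ n in atTop, (u (n + 1) : ℝ) ≤ β * u n) :
    irrationalityExponent ξ ≤ ((1 - Real.log β / Real.log α : ℝ) : EReal) := by
  obtain ⟨N, hN⟩ := eventually_atTop.1 (hr.and hu)
  obtain ⟨c, hc, hbound⟩ := exists_pos_lt_abs_sub_div (u := fun k => u (N + k))
    (v := fun k => v (N + k)) hξ hα0 hα1 hβ (hne N) (fun k => hpos _)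
    (fun k => (hN (N + k) (by omega)).1) (fun k => (hN (N + k) (by omega)).2)
  exact irrationalityExponent_le_of_lt_abs_sub_div hc hbound

theorem irrationality_exponent_le_of_ratio (ξ : ℝ) (hξ : Irrational ξ)
    (α β : ℝ) (hα0 : 0 < α) (hα1 : α < 1) (hβ : 1 < β)
    (u v : ℕ → ℤ)
    (hne : ∀ n, (u n : ℝ) * ξ - (v n : ℝ) ≠ 0) (hpos : ∀ n, 0 < u n)
    (hratio : limsup (fun n =>
        ((|(u (n + 1) : ℝ) * ξ - (v (n + 1) : ℝ)| / |(u n : ℝ) * ξ - (v n : ℝ)| : ℝ) : EReal))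
        atTop ≤ (α : EReal))
    (hgrowth : limsup (fun n => (((u (n + 1) : ℝ) / (u n : ℝ) : ℝ) : EReal)) atTop
        ≤ (β : EReal)) :
    irrationalityExponent ξ ≤ ((1 - Real.log β / Real.log α : ℝ) : EReal) := by
  have hcont : ContinuousAt (fun t : ℝ => 1 - Real.log (β + t) / Real.log (α + t)) 0 := by
    have hlogα : Real.log (α + 0) ≠ 0 := by rw [add_zero]; exact (Real.log_neg hα0 hα1).ne
    fun_prop (disch := first | exact hlogα | (simp; linarith))
  have hlim : Tendsto (fun t : ℝ => ((1 - Real.log (β + t) / Real.log (α + t) : ℝ) : EReal))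
      (𝓝[>] 0) (𝓝 ((1 - Real.log β / Real.log α : ℝ) : EReal)) := by
    refine (continuous_coe_real_ereal.tendsto _).comp ?_
    simpa using hcont.tendsto.mono_left nhdsWithin_le_nhds
  refine ge_of_tendsto hlim ?_
  filter_upwards [Ioo_mem_nhdsGT (sub_pos.2 hα1)] with t ⟨ht0, ht1⟩
  exact irrationalityExponent_le_of_eventually hξ (by linarith) (by linarith) (by linarith) hne hpos
    (eventually_le_mul_of_limsup_div_le (fun n => abs_pos.2 (hne n)) hratio (by linarith))
    (eventually_le_mul_of_limsup_div_le (f := fun n => (u n : ℝ))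
      (fun n => Int.cast_pos.2 (hpos n)) hgrowth (by linarith))
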